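/- Let n ≥ 2 and m ≥ 2 be integers, let f ∈ R_m = ℤ[x_1, ..., x_m], and let 1 ≤ i < j ≤ m. Then the integer c_{f^{2^n}}(x_i x_j)/2^n satisfies the congruence c_{f^{2^n}}(x_i x_j)/2^n ≡ c_f(1) · (c_f(x_i x_j) + c_f(x_i) · c_f(x_j)) (mod 2). -/

import Mathlib

/-!
For `i ≠ j` the coefficient of `x_i x_j` in a polynomial is the constant term of `∂_i ∂_j`
applied to it. Differentiating `f ^ N` twice by the Leibniz rule therefore gives
`c_{f^N}(x_i x_j) = N (a^(N-1) d + (N-1) a^(N-2) b c)`, where `a, b, c, d` are the coefficients of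
`1, x_i, x_j, x_i x_j` in `f`. For `N = 2^n` the factor `N` gives the divisibility, and for `n ≥ 2`
both exponents are positive and `N - 1` is odd, so modulo 2 the quotient is `a d + a b c`.
-/

namespace MvPolynomial

open Finsupp

variable {σ R : Type*} [CommSemiring R]

theorem coeff_zero_pderiv (i : σ) (p : MvPolynomial σ R) :
    coeff 0 (pderiv i p) = coeff (single i 1) p := by
  simp [coeff_pderiv]

theorem coeff_zero_pderiv_pderiv {i j : σ} (hij : i ≠ j) (p : MvPolynomial σ R) :
    coeff 0 (pderiv i (pderiv j p)) = coeff (single i 1 + single j 1) p := by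
  simp [coeff_pderiv, hij]

theorem coeff_single_add_single_pow {i j : σ} (hij : i ≠ j) (f : MvPolynomial σ R) (N : ℕ) :
    coeff (single i 1 + single j 1) (f ^ N) =
      N * (coeff 0 f ^ (N - 1) * coeff (single i 1 + single j 1) f +
        (N - 1 : ℕ) * coeff 0 f ^ (N - 2) * coeff (single i 1) f * coeff (single j 1) f) := by
  rw [← coeff_zero_pderiv_pderiv hij, ← coeff_zero_pderiv_pderiv hij, ← coeff_zero_pderiv,
    ← coeff_zero_pderiv, (pderiv j).leibniz_pow, map_nsmul, smul_eq_mul, Derivation.leibniz,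
    (pderiv i).leibniz_pow]
  simp only [smul_eq_mul, nsmul_eq_mul, Nat.sub_sub, ← constantCoeff_eq, map_add, map_mul,
    map_pow, map_natCast]
  ring

end MvPolynomial

theorem ZMod.pow_eq_self_of_ne_zero (x : ZMod 2) {k : ℕ} (hk : k ≠ 0) : x ^ k = x := by
  fin_cases x
  exacts [zero_pow hk, one_pow k]

theorem stmt_6_general (n m : ℕ) (hn : 2 ≤ n)
    (f : MvPolynomial (Fin m) ℤ) (i j : Fin m) (hij : i < j) :
    (2 : ℤ) ^ n ∣ MvPolynomial.coeff (Finsupp.single i 1 + Finsupp.single j 1) (f ^ 2 ^ n) ∧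
    MvPolynomial.coeff (Finsupp.single i 1 + Finsupp.single j 1) (f ^ 2 ^ n) / 2 ^ n ≡
      MvPolynomial.coeff 0 f *
        (MvPolynomial.coeff (Finsupp.single i 1 + Finsupp.single j 1) f +
          MvPolynomial.coeff (Finsupp.single i 1) f *
            MvPolynomial.coeff (Finsupp.single j 1) f) [ZMOD 2] := by
  rw [MvPolynomial.coeff_single_add_single_pow hij.ne, Nat.cast_pow, Nat.cast_ofNat]
  refine ⟨dvd_mul_right _ _, ?_⟩
  rw [Int.mul_ediv_cancel_left _ (by positivity)]
  refine (ZMod.intCast_eq_intCast_iff _ _ 2).1 ?_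
  have h4 : 2 ^ 2 ≤ 2 ^ n := Nat.pow_le_pow_right two_pos hn
  have h2 : (2 : ZMod 2) ^ n = 0 := by
    rw [show (2 : ZMod 2) = 0 from rfl, zero_pow (by omega)]
  push_cast [Nat.cast_sub (by omega : 1 ≤ 2 ^ n), h2]
  rw [ZMod.pow_eq_self_of_ne_zero _ (by omega), ZMod.pow_eq_self_of_ne_zero _ (by omega),
    show (0 - 1 : ZMod 2) = 1 from rfl]
  ring

/-- The integer `c_{f^{2^n}}(x_i x_j)/2^n` is congruent to
`c_f(1)·(c_f(x_i x_j) + c_f(x_i)·c_f(x_j))` modulo `2`. -/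
theorem stmt_6 (n m : ℕ) (hn : 2 ≤ n) (hm : 2 ≤ m)
    (f : MvPolynomial (Fin m) ℤ) (i j : Fin m) (hij : i < j) :
    (2 : ℤ) ^ n ∣ MvPolynomial.coeff (Finsupp.single i 1 + Finsupp.single j 1) (f ^ 2 ^ n) ∧
    MvPolynomial.coeff (Finsupp.single i 1 + Finsupp.single j 1) (f ^ 2 ^ n) / 2 ^ n ≡
      MvPolynomial.coeff 0 f *
        (MvPolynomial.coeff (Finsupp.single i 1 + Finsupp.single j 1) f +
          MvPolynomial.coeff (Finsupp.single i 1) f *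
            MvPolynomial.coeff (Finsupp.single j 1) f) [ZMOD 2] :=
  stmt_6_general n m hn f i j hij
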